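/- arXiv:2001.11647 — 3 statements merged into one kernel-verified Lean document; each statement's English description precedes it below -/
import Mathlib

section
/- For every integer vector v = (v_1,…,v_r) with 0 ≤ v_r < v_{r−1} < ⋯ < v_1 < r+k, one has Σ_{μ∈P_k} S_μ(ζ_v)·S_{μ*}(ζ_v) = exp(2πik|v|/(r+k)) · k(r+k)^{r−1} / D(v). -/
open scoped BigOperators
open Complex

noncomputable section

namespace VerlindePaper

/-- The Schur value `S_λ(z₁,…,z_r) = det(z_j^{λ_i+r-i}) / det(z_j^{r-i})`
(indices `i` are 0-based, so the exponent is `λ i + (r - 1 - i)`). -/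
noncomputable def schur {r : ℕ} (lam : Fin r → ℤ) (z : Fin r → ℂ) : ℂ :=
  Matrix.det (Matrix.of fun i j : Fin r => z j ^ (lam i + ((r : ℤ) - 1 - (i : ℕ)))) /
    Matrix.det (Matrix.of fun i j : Fin r => z j ^ ((r : ℤ) - 1 - (i : ℕ)))

/-- `ζ_v = (e^{2πi v_1/(r+k)}, …, e^{2πi v_r/(r+k)})`. -/
noncomputable def zeta (r k : ℕ) (v : Fin r → ℤ) : Fin r → ℂ :=
  fun j => Complex.exp (2 * (Real.pi : ℂ) * Complex.I * (v j : ℂ) / ((r : ℂ) + (k : ℂ)))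

/-- `D(v) = ∏_{i<j} (2 sin(π(v_i - v_j)/(r+k)))²`. -/
noncomputable def Dv (r k : ℕ) (v : Fin r → ℤ) : ℝ :=
  ∏ p ∈ Finset.univ.filter (fun p : Fin r × Fin r => p.1 < p.2),
    (2 * Real.sin (Real.pi * ((v p.1 : ℝ) - (v p.2 : ℝ)) / ((r : ℝ) + (k : ℝ)))) ^ 2

/-- `P̄_k = {μ : 0 ≤ μ_r ≤ ⋯ ≤ μ_1 ≤ k}` (0-based: `μ 0 = μ_1`). -/
def Pbar (r k : ℕ) : Finset (Fin r → ℤ) :=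
  (Finset.Icc 0 (fun _ => (k : ℤ))).filter (fun μ => ∀ i j : Fin r, i ≤ j → μ j ≤ μ i)

/-- `P_k = {μ : 0 ≤ μ_r ≤ ⋯ ≤ μ_1 ≤ k-1}`. -/
def Pk (r k : ℕ) : Finset (Fin r → ℤ) :=
  (Finset.Icc 0 (fun _ => (k : ℤ) - 1)).filter (fun μ => ∀ i j : Fin r, i ≤ j → μ j ≤ μ i)

/-- `W_k = {μ ∈ P̄_k : μ_r = 0}`. -/
def Wk (r k : ℕ) : Finset (Fin r → ℤ) :=
  (Pbar r k).filter (fun μ => ∀ i : Fin r, (i : ℕ) = r - 1 → μ i = 0)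

/-- `μ* = (k - μ_r, k - μ_{r-1}, …, k - μ_1)`. -/
def mustar (k : ℕ) {r : ℕ} (μ : Fin r → ℤ) : Fin r → ℤ :=
  fun i => (k : ℤ) - μ i.rev

/-- `μ ∼ ν` iff `μ - ν` is a constant vector. -/
def sim {r : ℕ} (μ ν : Fin r → ℤ) : Prop := ∃ a : ℤ, ∀ i, μ i = ν i + a

/-- The index set of the Verlinde sums: integer vectors with
`0 = v_r < v_{r-1} < ⋯ < v_1 < r + k`. -/
def Vset (r k : ℕ) : Finset (Fin r → ℤ) :=
  (Finset.Icc 0 (fun _ => (r : ℤ) + (k : ℤ) - 1)).filter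
    (fun v => (∀ i j : Fin r, i < j → v j < v i) ∧ ∀ i : Fin r, (i : ℕ) = r - 1 → v i = 0)

/-- The Verlinde number `V_g(r,d,(λ_x)_{x∈I})`. -/
noncomputable def verlinde (r k : ℕ) (g : ℕ) (d : ℤ) {I : Type*} [Fintype I]
    (lam : I → Fin r → ℤ) : ℂ :=
  (-1 : ℂ) ^ (d * ((r : ℤ) - 1)) * ((k : ℂ) / (r : ℂ)) ^ g *
    ((r : ℂ) * ((r : ℂ) + (k : ℂ)) ^ (r - 1)) ^ ((g : ℤ) - 1) *
    ∑ v ∈ Vset r k,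
      Complex.exp (2 * (Real.pi : ℂ) * Complex.I *
          ((d : ℂ) / (r : ℂ) -
            (∑ x, ∑ i, (lam x i : ℂ)) / ((r : ℂ) * ((r : ℂ) + (k : ℂ)))) *
          (∑ i, (v i : ℂ))) *
        (∏ x, schur (lam x) (zeta r k v)) * ((Dv r k v : ℂ)) ^ (1 - (g : ℤ))

/-- The Hecke transformation
`H¹(μ) = (k - μ_{r-1} + μ_r, μ_1 - μ_{r-1}, …, μ_{r-2} - μ_{r-1}, 0)`. -/
def H1 (k : ℕ) {r : ℕ} (μ : Fin r → ℤ) : Fin r → ℤ := fun j =>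
  have hj : (j : ℕ) < r := j.isLt
  if (j : ℕ) = 0 then (k : ℤ) - μ ⟨r - 2, by omega⟩ + μ ⟨r - 1, by omega⟩
  else μ ⟨(j : ℕ) - 1, by omega⟩ - μ ⟨r - 2, by omega⟩

/-- The iterated Hecke transformation `H^m = H¹ ∘ ⋯ ∘ H¹`. -/
def Hm (k : ℕ) {r : ℕ} (m : ℕ) (μ : Fin r → ℤ) : Fin r → ℤ := (H1 k)^[m] μ

/-- `μ ∈ Y(λ, ω_s)`: `μ` is a partition obtained from `λ` by adding `s` boxes,
no two in the same row. -/
def inY {r : ℕ} (lam : Fin r → ℤ) (s : ℕ) (μ : Fin r → ℤ) : Prop :=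
  (∀ i j : Fin r, i ≤ j → μ j ≤ μ i) ∧ (∀ i, μ i - lam i = 0 ∨ μ i - lam i = 1) ∧
    (∑ i, μ i) = (∑ i, lam i) + (s : ℤ)

/-- The Vandermonde product `Δ(z) = ∏_{i<j} (z_i - z_j)`. -/
noncomputable def vand {r : ℕ} (z : Fin r → ℂ) : ℂ :=
  ∏ p ∈ Finset.univ.filter (fun p : Fin r × Fin r => p.1 < p.2), (z p.1 - z p.2)

/-- `J_v(t) = Σ_{τ ∈ S_r} sgn(τ) exp(2πi (Σ_j v_{τ(j)} t_j)/(r+k))`. -/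
noncomputable def Jv (r k : ℕ) (v : Fin r → ℤ) (t : Fin r → Fin (r + k)) : ℂ :=
  ∑ τ : Equiv.Perm (Fin r), ((Equiv.Perm.sign τ : ℤ) : ℂ) *
    Complex.exp (2 * (Real.pi : ℂ) * Complex.I *
      (∑ j, (v (τ j) : ℂ) * ((t j : ℕ) : ℂ)) / ((r : ℂ) + (k : ℂ)))



end VerlindePaper

/-!
Write `a_e(z) = det (z_j ^ e_i)` for the alternant, so that `S_μ(z) = a_{μ+δ}(z) / a_δ(z)` with
`δ = (r-1, …, 0)`. On the unit circle `a_{-e} = conj a_e`, and `μ* + δ` is `(r+k-1) - (μ+δ)` read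
backwards; hence `S_μ S_{μ*} = (∏ z_j)^k |a_{μ+δ}|² / |a_δ|²`.

As `μ` runs over `P_k`, `μ + δ` runs over the strictly decreasing exponent vectors with entries in
`[0, r+k-2]`, so by Cauchy–Binet `∑_μ |a_{μ+δ}|²` is the Gram determinant `det (V V*)` of the
`r × (r+k-1)` Vandermonde matrix `V = (z_j^a)`. For distinct `(r+k)`-th roots of unity, geometric
sums give `V V* = (r+k) I - (z_p⁻¹ z_q)_{p,q}`, a rank-one perturbation of a scalar matrix, whose
determinant is `k (r+k)^(r-1)`. Finally `|a_δ(ζ_v)|² = ∏_{i<j} |ζ_i - ζ_j|² = D(v)` and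
`∏ ζ_j = e^{2πi|v|/(r+k)}`.
-/

section CauchyBinet

open Finset Matrix Equiv

variable {R : Type*} [CommRing R] {m : Type*} [Fintype m]

theorem Matrix.det_mul_eq_sum_det_submatrix_mul_prod {n : Type*} [Fintype n] [DecidableEq n]
    (A : Matrix n m R) (B : Matrix m n R) :
    (A * B).det = ∑ t : n → m, (A.submatrix id t).det * ∏ i, B (t i) i := by
  simp only [det_apply', mul_apply, prod_univ_sum, mul_sum, Fintype.piFinset_univ, sum_mul,
    submatrix_apply, id, prod_mul_distrib, mul_assoc]
  exact sum_comm

theorem Finset.sum_injective_eq_sum_strictMono_sum_perm {α M : Type*} [LinearOrder α]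
    [Fintype α] [AddCommMonoid M] {r : ℕ} (g : (Fin r → α) → M) :
    ∑ t : Fin r → α with t.Injective, g t =
      ∑ s : Fin r → α with StrictMono s, ∑ σ : Perm (Fin r), g (s ∘ σ) := by
  rw [← sum_product']
  symm
  refine sum_nbij' (fun p => p.1 ∘ p.2) (fun t => (t ∘ Tuple.sort t, (Tuple.sort t)⁻¹))
    ?_ ?_ ?_ ?_ (fun _ _ => rfl)
  · rintro ⟨s, σ⟩ hp
    simp only [mem_product, mem_filter_univ] at hp ⊢
    exact hp.1.injective.comp σ.injective
  · intro t ht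
    simp only [mem_product, mem_filter_univ, mem_univ, and_true] at ht ⊢
    exact (Tuple.monotone_sort t).strictMono_of_injective (ht.comp (Tuple.sort t).injective)
  · rintro ⟨s, σ⟩ hp
    simp only [mem_product, mem_filter_univ] at hp
    have hsort : σ⁻¹ = Tuple.sort (s ∘ σ) := Tuple.eq_sort_iff.2
      ⟨by simpa [Function.comp_def] using hp.1.monotone,
        fun i j hij h => absurd (hp.1.injective (by simpa using h)) (by simpa using hij.ne)⟩
    change ((s ∘ σ) ∘ Tuple.sort (s ∘ σ), (Tuple.sort (s ∘ σ))⁻¹) = (s, σ)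
    rw [← hsort]
    ext i <;> simp
  · intro t _
    ext i; simp

/-- The Cauchy–Binet formula. -/
theorem Matrix.det_mul_eq_sum_strictMono {r : ℕ} [LinearOrder m] (A : Matrix (Fin r) m R)
    (B : Matrix m (Fin r) R) :
    (A * B).det = ∑ s : Fin r → m with StrictMono s,
      (A.submatrix id s).det * (B.submatrix s id).det := by
  have hzero : ∀ t : Fin r → m, ¬ t.Injective → (A.submatrix id t).det = 0 := by
    intro t ht
    obtain ⟨i, j, hij, hne⟩ := Function.not_injective_iff.1 ht
    exact det_zero_of_column_eq hne fun l => by simp [hij]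
  rw [det_mul_eq_sum_det_submatrix_mul_prod, ← sum_filter_of_ne (p := Function.Injective)
    fun t _ h => ?_, sum_injective_eq_sum_strictMono_sum_perm]
  · refine sum_congr rfl fun s _ => ?_
    simp only [det_apply' (B.submatrix s id), mul_sum, submatrix_apply, id]
    refine sum_congr rfl fun σ _ => ?_
    rw [show A.submatrix id (s ∘ σ) = (A.submatrix id s).submatrix id σ from rfl, det_permute']
    simp only [Function.comp_apply]
    ring
  · by_contra ht
    exact h (by rw [hzero t ht, zero_mul])

end CauchyBinet

section Gram

open Finset Matrix

theorem geom_sum_range_pred_of_pow_eq_one {K : Type*} [Field K] {w : K} {n : ℕ} (hn : n ≠ 0)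
    (hw : w ^ n = 1) (hw1 : w ≠ 1) : ∑ a ∈ range (n - 1), w ^ a = -w⁻¹ := by
  obtain ⟨m, rfl⟩ := Nat.exists_eq_add_one_of_ne_zero hn
  have hsum : ∑ a ∈ range (m + 1), w ^ a = 0 := by
    rw [geom_sum_eq hw1, hw, sub_self, zero_div]
  have hinv : w ^ m = w⁻¹ := eq_inv_of_mul_eq_one_left (by rw [← pow_succ, hw])
  rw [sum_range_succ, hinv] at hsum
  rw [add_tsub_cancel_right]
  exact eq_neg_of_add_eq_zero_left hsum

theorem Matrix.det_smul_one_sub_vecMulVec {K ι : Type*} [Field K] [Fintype ι] [DecidableEq ι]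
    (hι : Fintype.card ι ≠ 0) {c : K} (hc : c ≠ 0) (u w : ι → K) :
    (c • (1 : Matrix ι ι K) - vecMulVec u w).det = c ^ (Fintype.card ι - 1) * (c - w ⬝ᵥ u) := by
  have h : c • (1 : Matrix ι ι K) - vecMulVec u w =
      c • (1 + replicateCol Unit (-c⁻¹ • u) * replicateRow Unit w) := by
    rw [← vecMulVec_eq, smul_add, smul_vecMulVec, smul_smul, mul_neg, mul_inv_cancel₀ hc,
      neg_smul, one_smul, sub_eq_add_neg]
  obtain ⟨m, hm⟩ := Nat.exists_eq_add_one_of_ne_zero hι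
  rw [h, det_smul, det_one_add_replicateCol_mul_replicateRow, hm, pow_succ, dotProduct_smul,
    add_tsub_cancel_right, smul_eq_mul]
  field_simp
  ring

theorem Matrix.rectVandermonde_mul_conjTranspose_of_pow_eq_one {r n : ℕ} {z : Fin r → ℂ}
    (hn : n ≠ 0) (hz : ∀ j, z j ^ n = 1) (hinj : Function.Injective z) :
    rectVandermonde z 1 (n - 1) * (rectVandermonde z 1 (n - 1))ᴴ =
      (n : ℂ) • 1 - vecMulVec (fun p => (z p)⁻¹) z := by
  have hz0 : ∀ j, z j ≠ 0 := fun j h => by simpa [h, zero_pow hn] using hz j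
  ext p q
  have hentry : ∀ a : ℕ, z p ^ a * star (z q ^ a) = (z p * (z q)⁻¹) ^ a := by
    intro a
    rw [star_pow, Complex.star_def,
      ← Complex.inv_eq_conj (Complex.norm_eq_one_of_pow_eq_one (hz q) hn), mul_pow, inv_pow]
  simp only [mul_apply, conjTranspose_apply, rectVandermonde_apply, Pi.one_apply, one_pow,
    mul_one, hentry, Fin.sum_univ_eq_sum_range (fun a => (z p * (z q)⁻¹) ^ a), Matrix.sub_apply,
    Matrix.smul_apply, one_apply, vecMulVec_apply, smul_eq_mul]
  by_cases hpq : p = q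
  · subst hpq
    simp [mul_inv_cancel₀ (hz0 p), inv_mul_cancel₀ (hz0 p),
      Nat.cast_sub (Nat.one_le_iff_ne_zero.2 hn)]
  · have hw1 : z p * (z q)⁻¹ ≠ 1 := by
      rwa [Ne, mul_inv_eq_one₀ (hz0 q), hinj.eq_iff]
    have hw : (z p * (z q)⁻¹) ^ n = 1 := by rw [mul_pow, inv_pow, hz, hz, inv_one, one_mul]
    rw [geom_sum_range_pred_of_pow_eq_one hn hw hw1, if_neg hpq, mul_inv, inv_inv]
    ring

end Gram

theorem StrictMono.monotone_sub_val {r : ℕ} {f : Fin r → ℤ} (hf : StrictMono f) :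
    Monotone fun i => f i - (i : ℕ) := by
  have key : ∀ (d : ℕ) (i : Fin r) (h : (i : ℕ) + d < r), f i + d ≤ f ⟨i + d, h⟩ := by
    intro d
    induction d with
    | zero => simp
    | succ d ih =>
      intro i h
      have hlt : f ⟨i + d, by omega⟩ < f ⟨i + (d + 1), h⟩ := hf (Fin.mk_lt_mk.2 (by omega))
      have := ih i (by omega)
      push_cast
      omega
  intro i j hij
  have := key (j - i) i (by omega)
  simp only [Nat.add_sub_cancel' (Fin.le_def.1 hij), Fin.eta] at this
  show f i - (i : ℕ) ≤ f j - (j : ℕ)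
  omega

theorem Equiv.Perm.intCast_sign_mul_self {K ι : Type*} [Ring K] [Fintype ι] [DecidableEq ι]
    (σ : Equiv.Perm ι) : ((Equiv.Perm.sign σ : ℤ) : K) * (Equiv.Perm.sign σ : ℤ) = 1 := by
  rw [← Int.cast_mul, ← Units.val_mul, Int.units_mul_self, Units.val_one, Int.cast_one]

theorem Finset.prod_filter_fst_lt_snd {M : Type*} [CommMonoid M] {r : ℕ}
    (f : Fin r → Fin r → M) :
    ∏ p ∈ univ.filter (fun p : Fin r × Fin r => p.1 < p.2), f p.1 p.2 =
      ∏ i, ∏ j ∈ Ioi i, f i j := by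
  rw [prod_filter, Fintype.prod_prod_type]
  refine prod_congr rfl fun i _ => ?_
  rw [← prod_filter, filter_lt_eq_Ioi]

namespace VerlindePaper

open Finset Equiv

section Alternant

open Matrix

variable {K : Type*} [Field K] {r : ℕ}

def alternant (z : Fin r → K) (e : Fin r → ℤ) : K :=
  (Matrix.of fun i j => z j ^ e i).det

def staircase (r : ℕ) : Fin r → ℤ := fun i => (r : ℤ) - 1 - (i : ℕ)

theorem schur_eq_alternant_div (μ : Fin r → ℤ) (z : Fin r → ℂ) :
    schur μ z = alternant z (μ + staircase r) / alternant z (staircase r) := rfl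

theorem alternant_comp_perm (z : Fin r → K) (e : Fin r → ℤ) (σ : Perm (Fin r)) :
    alternant z (e ∘ σ) = Perm.sign σ * alternant z e :=
  det_permute σ (Matrix.of fun i j => z j ^ e i)

theorem alternant_add_const {z : Fin r → K} (hz : ∀ j, z j ≠ 0) (e : Fin r → ℤ) (c : ℤ) :
    alternant z (e + fun _ => c) = (∏ j, z j) ^ c * alternant z e := by
  rw [alternant, alternant, ← Finset.prod_zpow, ← det_mul_row]
  congr 1
  ext i j
  simp [zpow_add₀ (hz j), mul_comm]

theorem alternant_neg {z : Fin r → ℂ} (hz : ∀ j, ‖z j‖ = 1) (e : Fin r → ℤ) :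
    alternant z (-e) = star (alternant z e) := by
  rw [alternant, alternant, ← det_conjTranspose, ← det_transpose]
  congr 1
  ext i j
  simp [← Complex.inv_eq_conj (hz i)]

theorem alternant_comp_perm_mul_star (z : Fin r → ℂ) (e : Fin r → ℤ) (σ : Perm (Fin r)) :
    alternant z (e ∘ σ) * star (alternant z (e ∘ σ)) = alternant z e * star (alternant z e) := by
  rw [alternant_comp_perm, star_mul, star_intCast]
  linear_combination alternant z e * star (alternant z e) * Perm.intCast_sign_mul_self (K := ℂ) σ

theorem alternant_val_eq_prod_sub (z : Fin r → K) :
    alternant z (fun i => (i : ℕ)) = ∏ i, ∏ j ∈ Ioi i, (z j - z i) := by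
  rw [alternant, ← det_vandermonde, ← det_transpose]
  congr 1
  ext i j
  simp [vandermonde]

theorem alternant_eq_det_submatrix_rectVandermonde {m : ℕ} (z : Fin r → K) (s : Fin r → Fin m) :
    alternant z (fun i => ((s i : ℕ) : ℤ)) = ((rectVandermonde z 1 m).submatrix id s).det := by
  rw [alternant, ← det_transpose]
  congr 1
  ext i j
  simp [rectVandermonde_apply]

end Alternant

section Staircase

variable {r : ℕ} {z : Fin r → ℂ}

theorem ne_zero_of_norm_eq_one {x : ℂ} (hx : ‖x‖ = 1) : x ≠ 0 :=
  norm_ne_zero_iff.1 (hx ▸ one_ne_zero)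

theorem staircase_comp_rev : staircase r ∘ Fin.revPerm = fun i : Fin r => ((i : ℕ) : ℤ) := by
  ext i
  simp only [staircase, Function.comp_apply, Fin.revPerm_apply, Fin.val_rev]
  omega

theorem star_alternant_staircase (hz : ∀ j, ‖z j‖ = 1) :
    star (alternant z (staircase r)) =
      (∏ j, z j) ^ (1 - r : ℤ) * Perm.sign (Fin.revPerm : Perm (Fin r)) *
        alternant z (staircase r) := by
  have h : -staircase r = staircase r ∘ Fin.revPerm + fun _ => (1 - r : ℤ) := by
    ext i
    simp only [staircase, Pi.neg_apply, Pi.add_apply, Function.comp_apply, Fin.revPerm_apply,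
      Fin.val_rev]
    omega
  rw [← alternant_neg hz, h, alternant_add_const fun j => ne_zero_of_norm_eq_one (hz j),
    alternant_comp_perm, mul_assoc]

theorem mustar_add_staircase (k : ℕ) (μ : Fin r → ℤ) :
    mustar k μ + staircase r =
      (-(μ + staircase r)) ∘ Fin.revPerm + fun _ => (r + k - 1 : ℤ) := by
  ext i
  simp only [mustar, staircase, Pi.neg_apply, Pi.add_apply, Function.comp_apply,
    Fin.revPerm_apply, Fin.val_rev]
  omega

theorem alternant_mustar_add_staircase (hz : ∀ j, ‖z j‖ = 1) (k : ℕ) (μ : Fin r → ℤ) :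
    alternant z (mustar k μ + staircase r) =
      (∏ j, z j) ^ (r + k - 1 : ℤ) * Perm.sign (Fin.revPerm : Perm (Fin r)) *
        star (alternant z (μ + staircase r)) := by
  rw [mustar_add_staircase, alternant_add_const fun j => ne_zero_of_norm_eq_one (hz j),
    alternant_comp_perm, alternant_neg hz, mul_assoc]

theorem schur_mul_schur_mustar (hz : ∀ j, ‖z j‖ = 1) (k : ℕ) (μ : Fin r → ℤ) :
    schur μ z * schur (mustar k μ) z =
      (∏ j, z j) ^ k * (alternant z (μ + staircase r) * star (alternant z (μ + staircase r)) /
        (alternant z (staircase r) * star (alternant z (staircase r)))) := by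
  have hE : ∏ j, z j ≠ 0 := prod_ne_zero_iff.2 fun j _ => ne_zero_of_norm_eq_one (hz j)
  have hpow : (∏ j, z j) ^ (r + k - 1 : ℤ) = (∏ j, z j) ^ k * (∏ j, z j) ^ (r - 1 : ℤ) := by
    rw [← zpow_natCast, ← zpow_add₀ hE]
    ring_nf
  have hpow' : (∏ j, z j) ^ (1 - r : ℤ) = ((∏ j, z j) ^ (r - 1 : ℤ))⁻¹ := by
    rw [← zpow_neg, neg_sub]
  have hs : ((Perm.sign (Fin.revPerm : Perm (Fin r)) : ℤ) : ℂ)⁻¹ = Perm.sign Fin.revPerm :=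
    inv_eq_of_mul_eq_one_left (Perm.intCast_sign_mul_self _)
  rw [schur_eq_alternant_div, schur_eq_alternant_div, alternant_mustar_add_staircase hz,
    star_alternant_staircase hz, hpow, hpow']
  simp only [div_eq_mul_inv, mul_inv, inv_inv, hs]
  ring

theorem alternant_staircase_mul_star (z : Fin r → ℂ) :
    alternant z (staircase r) * star (alternant z (staircase r)) =
      ∏ p ∈ univ.filter (fun p : Fin r × Fin r => p.1 < p.2), ((‖z p.1 - z p.2‖ ^ 2 : ℝ) : ℂ) := by
  rw [← alternant_comp_perm_mul_star z _ Fin.revPerm, staircase_comp_rev, alternant_val_eq_prod_sub,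
    star_prod, ← prod_mul_distrib,
    Finset.prod_filter_fst_lt_snd fun i j => ((‖z i - z j‖ ^ 2 : ℝ) : ℂ)]
  refine prod_congr rfl fun i _ => ?_
  rw [star_prod, ← prod_mul_distrib]
  refine prod_congr rfl fun j _ => ?_
  rw [star_def, mul_conj', norm_sub_rev]
  push_cast
  rfl

end Staircase

theorem mem_Pk_iff {r k : ℕ} {μ : Fin r → ℤ} :
    μ ∈ Pk r k ↔ (∀ i, 0 ≤ μ i ∧ μ i ≤ k - 1) ∧ Antitone μ := by
  simp only [Pk, mem_filter, mem_Icc, Pi.le_def, Pi.zero_apply, forall_and, Antitone]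

theorem mem_Pk_of_strictMono {r k : ℕ} {s : Fin r → Fin (r + k - 1)} (hs : StrictMono s) :
    (fun i => (s i.rev : ℤ) - (i.rev : ℕ)) ∈ Pk r k := by
  have hm : Monotone fun i => ((s i : ℕ) : ℤ) - (i : ℕ) :=
    StrictMono.monotone_sub_val fun a b hab => by simpa using hs hab
  refine mem_Pk_iff.2 ⟨fun i => ⟨?_, ?_⟩, fun i j hij => hm (Fin.rev_le_rev.2 hij)⟩
  · have := hm (Fin.le_def.2 (Nat.zero_le _) : (⟨0, i.pos⟩ : Fin r) ≤ i.rev)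
    simp only at this
    omega
  · have hlast : r - 1 < r := by have := i.isLt; omega
    have := hm (Fin.le_def.2 (by simp; omega) : i.rev ≤ ⟨r - 1, hlast⟩)
    have := (s ⟨r - 1, hlast⟩).isLt
    simp only at *
    omega

theorem sum_strictMono_eq_sum_Pk {M : Type*} [AddCommMonoid M] (r k : ℕ)
    (g : (Fin r → ℤ) → M) :
    ∑ s : Fin r → Fin (r + k - 1) with StrictMono s, g (fun i => (s i : ℤ)) =
      ∑ μ ∈ Pk r k, g ((μ + staircase r) ∘ Fin.revPerm) := by
  refine sum_bij' (fun s _ i => (s i.rev : ℤ) - (i.rev : ℕ))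
    (fun μ hμ i => ⟨(μ i.rev + i).toNat, ?_⟩) (fun s hs => ?_) (fun μ hμ => ?_)
    (fun s _ => ?_) (fun μ hμ => ?_) (fun s _ => ?_)
  · obtain ⟨hbd, -⟩ := mem_Pk_iff.1 hμ
    have := hbd i.rev
    have := i.rev.isLt
    rw [Fin.val_rev] at *
    omega
  · exact mem_Pk_of_strictMono ((mem_filter_univ s).1 hs)
  · simp only [mem_filter_univ]
    intro a b hab
    obtain ⟨hbd, hanti⟩ := mem_Pk_iff.1 hμ
    have := hanti (Fin.rev_le_rev.2 hab.le)
    have := hbd a.rev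
    have := hbd b.rev
    simp only [Fin.mk_lt_mk]
    omega
  · ext i
    simp only [Fin.rev_rev]
    omega
  · ext i
    have := (mem_Pk_iff.1 hμ).1 i
    simp only [Fin.rev_rev]
    omega
  · congr 1
    ext i
    simp only [staircase, Function.comp_apply, Pi.add_apply, Fin.revPerm_apply, Fin.rev_rev,
      Fin.val_rev]
    omega

open Matrix in
theorem sum_Pk_alternant_mul_star {r k : ℕ} (hr : r ≠ 0) {z : Fin r → ℂ}
    (hz : ∀ j, z j ^ (r + k) = 1) (hinj : Function.Injective z) :
    ∑ μ ∈ Pk r k, alternant z (μ + staircase r) * star (alternant z (μ + staircase r)) =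
      k * ((r : ℂ) + k) ^ (r - 1) := by
  have hn : r + k ≠ 0 := by omega
  have hz0 : ∀ j, z j ≠ 0 := fun j h => by simpa [h, zero_pow hn] using hz j
  set A := rectVandermonde z 1 (r + k - 1)
  calc ∑ μ ∈ Pk r k, alternant z (μ + staircase r) * star (alternant z (μ + staircase r))
      = ∑ μ ∈ Pk r k, alternant z ((μ + staircase r) ∘ Fin.revPerm) *
          star (alternant z ((μ + staircase r) ∘ Fin.revPerm)) :=
        sum_congr rfl fun μ _ => (alternant_comp_perm_mul_star z _ _).symm
    _ = ∑ s : Fin r → Fin (r + k - 1) with StrictMono s,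
          (A.submatrix id s).det * (Aᴴ.submatrix s id).det := by
        rw [← sum_strictMono_eq_sum_Pk r k (fun e => alternant z e * star (alternant z e))]
        refine sum_congr rfl fun s _ => ?_
        rw [alternant_eq_det_submatrix_rectVandermonde, ← conjTranspose_submatrix,
          det_conjTranspose]
    _ = (A * Aᴴ).det := (det_mul_eq_sum_strictMono A Aᴴ).symm
    _ = k * ((r : ℂ) + k) ^ (r - 1) := by
        rw [rectVandermonde_mul_conjTranspose_of_pow_eq_one hn hz hinj,
          det_smul_one_sub_vecMulVec (by simpa using hr) (by exact_mod_cast hn)]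
        simp [dotProduct, mul_inv_cancel₀ (hz0 _)]
        ring

theorem sum_Pk_schur_mul_schur_mustar_of_pow_eq_one {r k : ℕ} (hr : r ≠ 0) {z : Fin r → ℂ}
    (hz : ∀ j, z j ^ (r + k) = 1) (hinj : Function.Injective z) :
    ∑ μ ∈ Pk r k, schur μ z * schur (mustar k μ) z =
      (∏ j, z j) ^ k * (k * ((r : ℂ) + k) ^ (r - 1) /
        (alternant z (staircase r) * star (alternant z (staircase r)))) := by
  have hnorm : ∀ j, ‖z j‖ = 1 := fun j => Complex.norm_eq_one_of_pow_eq_one (hz j) (by omega)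
  simp_rw [schur_mul_schur_mustar hnorm]
  rw [← mul_sum, ← sum_div, sum_Pk_alternant_mul_star hr hz hinj]

section Zeta

open Complex
open scoped Real

variable {r k : ℕ} (v : Fin r → ℤ)

theorem zeta_eq_zpow (j : Fin r) :
    zeta r k v j = exp (2 * π * I / (r + k : ℕ)) ^ v j := by
  rw [zeta, ← exp_int_mul]
  congr 1
  push_cast
  ring

theorem zeta_pow_eq_one (hn : r + k ≠ 0) (j : Fin r) : zeta r k v j ^ (r + k) = 1 := by
  rw [zeta_eq_zpow, ← zpow_natCast, ← zpow_mul, mul_comm (v j), zpow_mul, zpow_natCast,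
    (isPrimitiveRoot_exp _ hn).pow_eq_one, one_zpow]

theorem zeta_injective (hn : r + k ≠ 0) (hdec : StrictAnti v) (hlow : ∀ i, 0 ≤ v i)
    (hhigh : ∀ i, v i < (r : ℤ) + (k : ℤ)) : Function.Injective (zeta r k v) := by
  intro a b hab
  rw [zeta_eq_zpow, zeta_eq_zpow, ← div_eq_one_iff_eq (zpow_ne_zero _ (exp_ne_zero _)),
    ← zpow_sub₀ (exp_ne_zero _), (isPrimitiveRoot_exp _ hn).zpow_eq_one_iff_dvd] at hab
  have := Int.eq_zero_of_abs_lt_dvd hab (by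
    have := hlow a; have := hlow b; have := hhigh a; have := hhigh b
    push_cast; rw [abs_lt]; constructor <;> linarith)
  exact hdec.injective (by linarith)

theorem prod_zeta_pow (m : ℕ) :
    (∏ j, zeta r k v j) ^ m =
      exp (2 * π * I * m * (∑ i, (v i : ℂ)) / ((r : ℂ) + (k : ℂ))) := by
  unfold zeta
  rw [← exp_sum, ← exp_nat_mul, ← sum_div, ← mul_sum]
  congr 1
  ring

theorem norm_zeta_sub_zeta (a b : Fin r) :
    ‖zeta r k v a - zeta r k v b‖ = |2 * Real.sin (π * (v a - v b) / (r + k))| := by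
  have hexp : ∀ j, zeta r k v j = exp (I * ↑(2 * π * v j / (r + k))) := fun j => by
    rw [zeta]
    congr 1
    push_cast
    ring
  rw [hexp, hexp, show ∀ x y : ℝ, exp (I * x) - exp (I * y) = exp (I * y) * (exp (I * ↑(x - y)) - 1)
    from fun x y => by rw [mul_sub, ← exp_add]; push_cast; ring_nf, norm_mul,
    norm_exp_I_mul_ofReal, one_mul, norm_exp_I_mul_ofReal_sub_one, Real.norm_eq_abs]
  congr 3
  ring

theorem Dv_eq_alternant_staircase_mul_star :
    (Dv r k v : ℂ) =
      alternant (zeta r k v) (staircase r) * star (alternant (zeta r k v) (staircase r)) := by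
  rw [alternant_staircase_mul_star, Dv, ofReal_prod]
  refine prod_congr rfl fun p _ => ?_
  rw [norm_zeta_sub_zeta, sq_abs]

end Zeta

theorem sum_Pk_schur_mul_schur_star_general (r k : ℕ) (hr : 1 ≤ r)
    (v : Fin r → ℤ) (hdec : ∀ i j : Fin r, i < j → v j < v i)
    (hlow : ∀ i, 0 ≤ v i) (hhigh : ∀ i, v i < (r : ℤ) + (k : ℤ)) :
    ∑ μ ∈ Pk r k, schur μ (zeta r k v) * schur (mustar k μ) (zeta r k v) =
      Complex.exp (2 * (Real.pi : ℂ) * Complex.I * (k : ℂ) * (∑ i, (v i : ℂ)) /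
          ((r : ℂ) + (k : ℂ))) *
        ((k : ℂ) * ((r : ℂ) + (k : ℂ)) ^ (r - 1) / ((Dv r k v : ℝ) : ℂ)) := by
  have hn : r + k ≠ 0 := by omega
  rw [sum_Pk_schur_mul_schur_mustar_of_pow_eq_one (by omega) (zeta_pow_eq_one v hn)
    (zeta_injective v hn hdec hlow hhigh), prod_zeta_pow, Dv_eq_alternant_staircase_mul_star]

/-- `Σ_{μ∈P_k} S_μ(ζ_v)·S_{μ*}(ζ_v) = e^{2πik|v|/(r+k)} · k(r+k)^{r-1} / D(v)`. -/
theorem sum_Pk_schur_mul_schur_star (r k : ℕ) (hr : 1 ≤ r) (hk : 1 ≤ k)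
    (v : Fin r → ℤ) (hdec : ∀ i j : Fin r, i < j → v j < v i)
    (hlow : ∀ i, 0 ≤ v i) (hhigh : ∀ i, v i < (r : ℤ) + (k : ℤ)) :
    ∑ μ ∈ Pk r k, schur μ (zeta r k v) * schur (mustar k μ) (zeta r k v) =
      Complex.exp (2 * (Real.pi : ℂ) * Complex.I * (k : ℂ) * (∑ i, (v i : ℂ)) /
          ((r : ℂ) + (k : ℂ))) *
        ((k : ℂ) * ((r : ℂ) + (k : ℂ)) ^ (r - 1) / ((Dv r k v : ℝ) : ℂ)) :=
  sum_Pk_schur_mul_schur_star_general r k hr v hdec hlow hhigh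
end VerlindePaper
end
end

section
/- Let v and v′ be integer vectors with 0 ≤ v_r < v_{r−1} < ⋯ < v_1 < r+k and 0 ≤ v′_r < v′_{r−1} < ⋯ < v′_1 < r+k such that v − v′ is not a constant vector (a,a,…,a). Then Σ_{μ∈W_k} exp(−2πi|μ|·|v|/(r(r+k))) · exp(−2πi|μ*|·|v′|/(r(r+k))) · S_μ(ζ_v) · S_{μ*}(ζ_{v′}) = 0. -/
open scoped BigOperators
open Complex

noncomputable section

/-!
Put `n = r + k`. Reading the exponents `μ_i + r - i` of the Schur numerator backwards identifies
`W_k` with the strictly increasing `e : Fin r → [0, n)` with `e 0 = 0`. The exponential prefactors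
are absorbed by `x_j = d ζ_{v,j}`, `d = exp (2πi (|v'| - |v|) / (r n))`, and `y_l = ζ_{v',l}⁻¹`, and
then each summand is a fixed constant times `det (x_j ^ e_i) * det (y_l ^ e_i)`.

By Cauchy–Binet the sum of these products over all such `e` equals `det G - det (G - J)`, where
`G_{il} = Σ_{s<n} (x_i y_l)^s` and `J` is the all-ones matrix. Now `y_l^n = 1`,
`x_i^n = γ = exp (2πi (|v'| - |v|) / r)` and `∏ x * ∏ y = 1`, and shifting `s ↦ s + 1` gives
`det (G + (γ - 1) J) = det G`. Since `c ↦ det (G + c J)` is affine, `γ ≠ 1` forces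
`det (G - J) = det G`. If `γ = 1`, then `|v'| = |v| + r c`, and because `v' - v` is not constant,
two distinct rows `j` have `x_j y_l ≠ 1` for all `l`. These rows of `G` are geometric sums of
nontrivial roots of unity, so they vanish, and both determinants are zero.
-/

open Finset

section CauchyBinet

theorem sum_piFinset_eq_sum_strictMono_sum_perm {α M : Type*} [LinearOrder α]
    [AddCommMonoid M] {r : ℕ} (S : Finset α) (f : (Fin r → α) → M)
    (hf : ∀ t, ¬ Function.Injective t → f t = 0) :
    ∑ t ∈ Fintype.piFinset (fun _ => S), f t =
      ∑ e ∈ (Fintype.piFinset fun _ => S).filter StrictMono,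
        ∑ σ : Equiv.Perm (Fin r), f (e ∘ σ) := by
  rw [← sum_filter_of_ne (p := Function.Injective) fun t _ => not_imp_comm.mp (hf t),
    ← sum_product']
  symm
  refine sum_nbij' (fun p => p.1 ∘ p.2) (fun t => (t ∘ Tuple.sort t, (Tuple.sort t)⁻¹))
    ?_ ?_ ?_ ?_ fun _ _ => rfl
  · rintro ⟨e, σ⟩ h
    simp only [mem_product, mem_filter, Fintype.mem_piFinset, mem_univ, and_true] at h ⊢
    exact ⟨fun i => h.1 (σ i), h.2.injective.comp σ.injective⟩
  · intro t h
    simp only [mem_product, mem_filter, Fintype.mem_piFinset, mem_univ, and_true] at h ⊢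
    exact ⟨fun i => h.1 _, (Tuple.monotone_sort t).strictMono_of_injective
      (h.2.comp (Tuple.sort t).injective)⟩
  · rintro ⟨e, σ⟩ h
    simp only [mem_product, mem_filter, mem_univ, and_true] at h
    have hsort : (e ∘ σ) ∘ Tuple.sort (e ∘ σ) = e := by
      rw [Tuple.comp_perm_comp_sort_eq_comp_sort,
        Tuple.sort_eq_refl_iff_monotone.mpr h.2.monotone]
      rfl
    have hσ : Tuple.sort (e ∘ σ) = σ⁻¹ := by
      ext i
      refine congrArg Fin.val (σ.injective (h.2.injective ?_))
      simpa using congrFun hsort i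
    rw [hσ, inv_inv, ← hsort, hσ]
    ext i <;> simp
  · intro t _
    ext i
    simp

variable {R : Type*} [CommRing R] {r : ℕ}

def powMatrix (x : Fin r → R) (e : Fin r → ℕ) : Matrix (Fin r) (Fin r) R :=
  Matrix.of fun i j => x j ^ e i

theorem sum_perm_det_mul_pow (x y : Fin r → R) (e : Fin r → ℕ) :
    ∑ σ : Equiv.Perm (Fin r), (Matrix.of fun i l => (x i * y l) ^ e (σ i)).det =
      (powMatrix x e).det * (powMatrix y e).det := by
  have hσ : ∀ σ : Equiv.Perm (Fin r), (Matrix.of fun i l => (x i * y l) ^ e (σ i)).det =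
      Equiv.Perm.sign σ * (∏ i, x i ^ e (σ i)) * (powMatrix y e).det := by
    intro σ
    have h := Matrix.det_mul_column (fun i => x i ^ e (σ i)) (Matrix.of fun i l => y l ^ e (σ i))
    simp only [Matrix.of_apply, ← mul_pow] at h
    rw [h, mul_comm _ (∏ i, _), mul_assoc, ← Matrix.det_permute σ]
    rfl
  simp_rw [hσ, powMatrix, Matrix.det_apply' (Matrix.of fun i j => x j ^ e i), sum_mul]
  rfl

theorem sum_strictMono_det_powMatrix_mul (S : Finset ℕ) (x y : Fin r → R) :
    ∑ e ∈ (Fintype.piFinset fun _ => S).filter StrictMono,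
        (powMatrix x e).det * (powMatrix y e).det =
      (Matrix.of fun i l => ∑ s ∈ S, (x i * y l) ^ s).det := by
  have hrows : (Matrix.of fun i l => ∑ s ∈ S, (x i * y l) ^ s).det =
      ∑ t ∈ Fintype.piFinset (fun _ => S), (Matrix.of fun i l => (x i * y l) ^ t i).det := by
    convert (Matrix.detRowAlternating (n := Fin r) (R := R)).map_sum_finset
      (fun i s l => (x i * y l) ^ s) (fun _ => S) using 2
    · exact congrArg Matrix.detRowAlternating (by ext i l; simp [Finset.sum_apply])
    · rfl
  rw [hrows, sum_piFinset_eq_sum_strictMono_sum_perm]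
  · exact sum_congr rfl fun e _ => (sum_perm_det_mul_pow x y e).symm
  · intro t ht
    obtain ⟨i, j, hij, hne⟩ := Function.not_injective_iff.mp ht
    have h := Matrix.det_mul_column (fun i => x i ^ t i) (Matrix.of fun i l => y l ^ t i)
    simp only [Matrix.of_apply, ← mul_pow] at h
    rw [h, Matrix.det_zero_of_row_eq hne (funext fun l => by simp [hij]), mul_zero]

end CauchyBinet

theorem Matrix.det_of_add_const {n R : Type*} [Fintype n] [DecidableEq n] [CommRing R]
    (A : Matrix n n R) (c : R) :
    (of fun i j => A i j + c).det = A.det + c * ((of fun i j => A i j + 1).det - A.det) := by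
  rcases isEmpty_or_nonempty n with hn | ⟨⟨k⟩⟩
  · simp [det_isEmpty]
  -- subtracting row `k` from the other rows confines `c` to row `k`
  let B : Matrix n n R := of fun i j => if i = k then A k j else A i j - A k j
  have hrow : ∀ c : R, (of fun i j => A i j + c).det =
      (B.updateRow k (A k)).det + c * (B.updateRow k 1).det := by
    intro c
    rw [← det_updateRow_smul, ← det_updateRow_add]
    refine det_eq_of_forall_row_eq_smul_add_const (fun i => if i = k then 0 else 1) k
      (if_pos rfl) fun i j => ?_
    by_cases hi : i = k
    · subst hi; simp
    · simp [B, hi]; ring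
  have h0 : A.det = (B.updateRow k (A k)).det + 0 * (B.updateRow k 1).det := by
    rw [← hrow 0]; simp; rfl
  rw [hrow c, hrow 1, h0]
  ring

section RootsOfUnity

variable {r : ℕ}

theorem det_sum_mul_pow_succ {R : Type*} [CommRing R] (S : Finset ℕ) (x y : Fin r → R) :
    (Matrix.of fun i l => ∑ s ∈ S, (x i * y l) ^ (s + 1)).det =
      ((∏ i, x i) * ∏ l, y l) * (Matrix.of fun i l => ∑ s ∈ S, (x i * y l) ^ s).det := by
  set G := Matrix.of fun i l => ∑ s ∈ S, (x i * y l) ^ s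
  calc (Matrix.of fun i l => ∑ s ∈ S, (x i * y l) ^ (s + 1)).det
      = (Matrix.of fun i l => y l * (Matrix.of fun i l => x i * G i l) i l).det := by
        congr 1
        ext i l
        simp only [G, Matrix.of_apply, mul_sum, pow_succ]
        exact sum_congr rfl fun s _ => by ring
    _ = ((∏ i, x i) * ∏ l, y l) * G.det := by
        rw [Matrix.det_mul_row, Matrix.det_mul_column]
        ring

theorem sum_strictMono_zero_mem_det_powMatrix_mul {R : Type*} [CommRing R] (n : ℕ)
    (x y : Fin r → R) :
    ∑ e ∈ (Fintype.piFinset fun _ => range (n + 1)).filter (fun e => StrictMono e ∧ ∃ i, e i = 0),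
        (powMatrix x e).det * (powMatrix y e).det =
      (Matrix.of fun i l => ∑ s ∈ range (n + 1), (x i * y l) ^ s).det -
        (Matrix.of fun i l => ∑ s ∈ range n, (x i * y l) ^ (s + 1)).det := by
  have hpos : (Fintype.piFinset fun _ => range (n + 1)).filter
      (fun e : Fin r → ℕ => StrictMono e ∧ ¬ ∃ i, e i = 0) =
      (Fintype.piFinset fun _ => Ico 1 (n + 1)).filter StrictMono := by
    ext e
    simp only [mem_filter, Fintype.mem_piFinset, mem_range, mem_Ico, not_exists]
    constructor
    · rintro ⟨he, hmono, h0⟩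
      exact ⟨fun i => ⟨Nat.one_le_iff_ne_zero.mpr (h0 i), he i⟩, hmono⟩
    · rintro ⟨he, hmono⟩
      exact ⟨fun i => (he i).2, hmono, fun i => Nat.one_le_iff_ne_zero.mp (he i).1⟩
  have hshift : (Matrix.of fun i l => ∑ s ∈ range n, (x i * y l) ^ (s + 1)) =
      Matrix.of fun i l => ∑ s ∈ Ico 1 (n + 1), (x i * y l) ^ s := by
    ext i l
    simp [sum_Ico_eq_sum_range, add_comm]
  rw [hshift, ← sum_strictMono_det_powMatrix_mul, ← sum_strictMono_det_powMatrix_mul, ← hpos,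
    eq_sub_iff_add_eq, ← filter_filter, ← filter_filter, sum_filter_add_sum_filter_not]

theorem sum_strictMono_zero_mem_det_powMatrix_mul_eq_zero {K : Type*} [Field K] {n : ℕ}
    (hn : 0 < n) {γ : K} {x y : Fin r → K} (hx : ∀ i, x i ^ n = γ) (hy : ∀ l, y l ^ n = 1)
    (hxy : (∏ i, x i) * ∏ l, y l = 1)
    (hγ : γ = 1 → ∃ j₁ j₂, j₁ ≠ j₂ ∧ ∀ l, x j₁ * y l ≠ 1 ∧ x j₂ * y l ≠ 1) :
    ∑ e ∈ (Fintype.piFinset fun _ => range n).filter (fun e => StrictMono e ∧ ∃ i, e i = 0),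
        (powMatrix x e).det * (powMatrix y e).det = 0 := by
  obtain ⟨m, rfl⟩ := Nat.exists_eq_add_one_of_ne_zero hn.ne'
  rw [sum_strictMono_zero_mem_det_powMatrix_mul, sub_eq_zero]
  set G := Matrix.of fun i l => ∑ s ∈ range (m + 1), (x i * y l) ^ s
  have hz : ∀ i l, (x i * y l) ^ (m + 1) = γ := fun i l => by rw [mul_pow, hx, hy, mul_one]
  have hlower : (Matrix.of fun i l => ∑ s ∈ range m, (x i * y l) ^ (s + 1)) =
      Matrix.of fun i l => G i l + -1 := by
    ext i l
    simp [G, sum_range_succ']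
  have hupper : (Matrix.of fun i l => G i l + (γ - 1)).det = G.det := by
    have hshift := det_sum_mul_pow_succ (range (m + 1)) x y
    rw [hxy, one_mul] at hshift
    rw [← hshift]
    congr 1
    ext i l
    simp only [G, Matrix.of_apply]
    rw [sum_range_succ (fun s => (x i * y l) ^ (s + 1)), hz,
      sum_range_succ' (fun s => (x i * y l) ^ s)]
    ring
  rw [hlower]
  by_cases h1 : γ = 1
  · obtain ⟨j₁, j₂, hne, hj⟩ := hγ h1
    have hrow : ∀ j, (∀ l, x j * y l ≠ 1) → ∀ l, G j l = 0 := fun j hj l => by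
      simp only [G, Matrix.of_apply, geom_sum_eq (hj l), hz, h1, sub_self, zero_div]
    rw [Matrix.det_eq_zero_of_row_eq_zero j₁ (hrow j₁ fun l => (hj l).1),
      Matrix.det_zero_of_row_eq hne (funext fun l => by
        simp [hrow j₁ (fun l => (hj l).1) l, hrow j₂ (fun l => (hj l).2) l])]
  · have hslope := Matrix.det_of_add_const G (γ - 1)
    rw [hupper, left_eq_add, mul_eq_zero, or_iff_right (sub_ne_zero.mpr h1)] at hslope
    rw [Matrix.det_of_add_const, hslope, mul_zero, add_zero]

end RootsOfUnity


theorem mem_range_of_sum_eq {G : Type*} [AddCommGroup G] [DecidableEq G] {r : ℕ}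
    {f g : Fin r → G} (hf : Function.Injective f) (hg : Function.Injective g)
    (hsum : ∑ j, f j = ∑ j, g j) (a : Fin r) (h : ∀ j ≠ a, f j ∈ Set.range g) :
    f a ∈ Set.range g := by
  set s := (univ.erase a).image f
  have hsub : s ⊆ univ.image g := by
    intro y hy
    obtain ⟨j, hj, rfl⟩ := mem_image.mp hy
    obtain ⟨l, hl⟩ := h j (ne_of_mem_erase hj)
    exact mem_image.mpr ⟨l, mem_univ l, hl⟩
  have hcard : s.card + 1 = (univ.image g).card := by
    rw [card_image_of_injective _ hf, card_image_of_injective _ hg,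
      card_erase_add_one (mem_univ a)]
  obtain ⟨β, hβ, hins⟩ := exists_eq_insert_iff.mpr ⟨hsub, hcard⟩
  have hg_sum : ∑ j, g j = β + ∑ y ∈ s, y := by
    have := sum_image (f := fun y => y) (s := univ) hg.injOn
    rw [← hins, sum_insert hβ] at this
    exact this.symm
  have hf_sum : ∑ j, f j = f a + ∑ y ∈ s, y := by
    rw [sum_image (f := fun y => y) hf.injOn, add_sum_erase _ _ (mem_univ a)]
  obtain rfl : f a = β := by
    rw [hf_sum, hg_sum] at hsum
    exact add_right_cancel hsum
  have : f a ∈ univ.image g := hins ▸ mem_insert_self _ _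
  simpa using this

theorem eq_add_of_forall_exists_dvd {r : ℕ} {n c : ℤ} {v v' : Fin r → ℤ} (hv : StrictAnti v)
    (hv' : StrictAnti v') (hlow : ∀ i, 0 ≤ v i) (hhigh : ∀ i, v i < n)
    (hlow' : ∀ i, 0 ≤ v' i) (hhigh' : ∀ i, v' i < n)
    (hsum : ∑ i, v' i = ∑ i, v i + r * c) (hmatch : ∀ j, ∃ l, n ∣ v j + c - v' l) (j : Fin r) :
    v' j = v j + c := by
  have hn : 0 < n := (hlow j).trans_lt (hhigh j)
  -- `v_i + c - v'_{σ i} = n q_i`: the `q_i` sum to `0` and all have the sign of `c`, so they vanish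
  choose σ q hq using hmatch
  have hσ : Function.Bijective σ := by
    refine Finite.injective_iff_bijective.mp fun i i' hii' => hv.injective ?_
    have hqi := hq i
    rw [hii'] at hqi
    have hdvd : n ∣ v i - v i' := ⟨q i - q i', by linear_combination hqi - hq i'⟩
    have := Int.eq_zero_of_abs_lt_dvd hdvd (abs_sub_lt_iff.mpr
      ⟨by linarith [hlow i', hhigh i], by linarith [hlow i, hhigh i']⟩)
    linarith
  have hq_sum : ∑ i, q i = 0 := by
    have : n * ∑ i, q i = 0 := by
      rw [mul_sum, ← sum_congr rfl fun i _ => hq i, sum_sub_distrib, sum_add_distrib,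
        hσ.sum_comp v', sum_const, card_univ, Fintype.card_fin, nsmul_eq_mul, hsum]
      ring
    exact (mul_eq_zero.mp this).resolve_left hn.ne'
  have hq_zero : ∀ i, q i = 0 := by
    rcases le_or_gt 0 c with hc | hc
    · have hq_nonneg : ∀ i, 0 ≤ q i := fun i => by
        nlinarith [hq i, hlow i, hhigh' (σ i)]
      exact fun i => (sum_eq_zero_iff_of_nonneg fun i _ => hq_nonneg i).mp hq_sum i (mem_univ i)
    · have hq_nonpos : ∀ i, q i ≤ 0 := fun i => by
        nlinarith [hq i, hhigh i, hlow' (σ i)]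
      exact fun i => (sum_eq_zero_iff_of_nonpos fun i _ => hq_nonpos i).mp hq_sum i (mem_univ i)
  have hval : ∀ i, v' (σ i) = v i + c := fun i => by
    have := hq i
    rw [hq_zero, mul_zero] at this
    linarith
  have hmono : Monotone (Equiv.ofBijective σ hσ) := StrictMono.monotone fun i i' hii' =>
    hv'.lt_iff_gt.mp (by simp only [Equiv.ofBijective_apply, hval]; linarith [hv hii'])
  have hid := congrArg (· j) ((Equiv.Perm.monotone_iff _).mp hmono)
  simp only [Equiv.ofBijective_apply, Equiv.Perm.coe_one, id_eq] at hid
  rw [← hval, hid]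

theorem intCast_zmod_injective {r N : ℕ} {w : Fin r → ℤ} (hw : Function.Injective w)
    (hlow : ∀ i, 0 ≤ w i) (hhigh : ∀ i, w i < N) : Function.Injective (fun i => (w i : ZMod N)) :=
  fun i j h => hw <| by
    have := (ZMod.intCast_eq_intCast_iff _ _ N).mp h
    rwa [Int.ModEq, Int.emod_eq_of_lt (hlow i) (hhigh i), Int.emod_eq_of_lt (hlow j) (hhigh j)]
      at this

theorem Complex.exp_two_pi_I_mul_div_eq_one_iff {n : ℕ} (hn : n ≠ 0) (m : ℤ) :
    exp (2 * Real.pi * I * m / n) = 1 ↔ (n : ℤ) ∣ m := by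
  rw [← (isPrimitiveRoot_exp n hn).zpow_eq_one_iff_dvd, ← exp_int_mul]
  ring_nf

theorem StrictMono.apply_add_val_le {r : ℕ} {e : Fin r → ℕ} (he : StrictMono e) {i j : Fin r}
    (hij : i ≤ j) : e i + j ≤ e j + i := by
  obtain ⟨d, hd⟩ := Nat.exists_eq_add_of_le (Fin.le_def.mp hij)
  induction d generalizing j with
  | zero =>
    obtain rfl : i = j := Fin.ext (by omega)
    rfl
  | succ d ih =>
    have hlt : (i : ℕ) + d < r := by omega
    have h1 := ih (j := ⟨i + d, hlt⟩) (Fin.le_def.mpr (by simp)) rfl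
    have h2 := he (show (⟨i + d, hlt⟩ : Fin r) < j from Fin.lt_def.mpr (by simp; omega))
    simp only at h1 h2
    omega

namespace VerlindePaper

theorem mem_Wk {r k : ℕ} {μ : Fin r → ℤ} :
    μ ∈ Wk r k ↔ (∀ i, 0 ≤ μ i) ∧ (∀ i, μ i ≤ k) ∧ Antitone μ ∧
      ∀ i : Fin r, (i : ℕ) = r - 1 → μ i = 0 := by
  simp only [Wk, Pbar, mem_filter, mem_Icc, Pi.le_def, and_assoc]
  rfl

def ascExp {r : ℕ} (μ : Fin r → ℤ) (i : Fin r) : ℕ := (μ i.rev).toNat + i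

theorem ascExp_rev {r : ℕ} {μ : Fin r → ℤ} (hμ : ∀ i, 0 ≤ μ i) (i : Fin r) :
    (ascExp μ i.rev : ℤ) = μ i + ((r : ℤ) - 1 - (i : ℕ)) := by
  have := i.isLt
  simp only [ascExp, Fin.rev_rev, Nat.cast_add, Int.toNat_of_nonneg (hμ i), Fin.val_rev]
  omega

theorem ascExp_mem_of_mem_Wk {r k : ℕ} (hr : 0 < r) {μ : Fin r → ℤ} (hμ : μ ∈ Wk r k) :
    ascExp μ ∈ (Fintype.piFinset fun _ => range (r + k)).filter
      (fun e => StrictMono e ∧ ∃ i, e i = 0) := by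
  obtain ⟨h0, hk, hanti, hlast⟩ := mem_Wk.mp hμ
  simp only [mem_filter, Fintype.mem_piFinset, mem_range]
  refine ⟨fun i => ?_, fun i j hij => ?_, ⟨⟨0, hr⟩, ?_⟩⟩
  · have := hk i.rev; have := h0 i.rev; have := i.isLt
    simp only [ascExp]; omega
  · have := hanti (Fin.rev_le_rev.mpr hij.le); have := h0 i.rev; have := h0 j.rev
    simp only [ascExp]; omega
  · have := hlast (Fin.rev ⟨0, hr⟩) (by simp)
    simp [ascExp, this]

theorem mem_Wk_of_strictMono {r k : ℕ} (hr : 0 < r) {e : Fin r → ℕ} (hlt : ∀ i, e i < r + k)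
    (hmono : StrictMono e) {i₀ : Fin r} (hi₀ : e i₀ = 0) :
    (fun j => (e j.rev : ℤ) - (j.rev : ℕ)) ∈ Wk r k := by
  have hfirst : ∀ i : Fin r, e ⟨0, hr⟩ + i ≤ e i := fun i => by
    have := hmono.apply_add_val_le (i := ⟨0, hr⟩) (j := i) (Fin.le_def.mpr (Nat.zero_le _))
    simpa using this
  have hlast : ∀ i : Fin r, e i + (r - 1) ≤ e ⟨r - 1, by omega⟩ + i := fun i =>
    hmono.apply_add_val_le (j := ⟨r - 1, by omega⟩) (Fin.le_def.mpr (by simp; omega))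
  have h0 : e ⟨0, hr⟩ = 0 := by have := hfirst i₀; omega
  refine mem_Wk.mpr ⟨fun j => ?_, fun j => ?_, fun a b hab => ?_, fun j hj => ?_⟩ <;>
    simp only [Fin.val_rev]
  · have := hfirst j.rev; simp only [Fin.val_rev] at this; omega
  · have := hlast j.rev; have := hlt ⟨r - 1, by omega⟩; simp only [Fin.val_rev] at *; omega
  · have := hmono.apply_add_val_le (Fin.rev_le_rev.mpr hab)
    simp only [Fin.val_rev] at this
    omega
  · have : j.rev = ⟨0, hr⟩ := Fin.ext (by simp [Fin.val_rev]; omega)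
    rw [← Fin.val_rev, this, h0]
    simp

theorem sum_Wk_eq_sum_strictMono {M : Type*} [AddCommMonoid M] {r : ℕ} (hr : 0 < r) (k : ℕ)
    (g : (Fin r → ℕ) → M) :
    ∑ μ ∈ Wk r k, g (ascExp μ) =
      ∑ e ∈ (Fintype.piFinset fun _ => range (r + k)).filter
        (fun e => StrictMono e ∧ ∃ i, e i = 0), g e := by
  refine sum_nbij' ascExp (fun e j => (e j.rev : ℤ) - (j.rev : ℕ))
    (fun μ hμ => ascExp_mem_of_mem_Wk hr hμ) (fun e he => ?_) (fun μ hμ => ?_) (fun e he => ?_)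
    fun _ _ => rfl
  · simp only [mem_filter, Fintype.mem_piFinset, mem_range] at he
    obtain ⟨hlt, hmono, i₀, hi₀⟩ := he
    exact mem_Wk_of_strictMono hr hlt hmono hi₀
  · funext j
    have := ascExp_rev (mem_Wk.mp hμ).1 j
    have := j.isLt
    simp only [Fin.val_rev]
    omega
  · funext i
    have := (mem_filter.mp he).2.1.apply_add_val_le (i := ⟨0, hr⟩) (j := i)
      (Fin.le_def.mpr (Nat.zero_le _))
    simp only [ascExp, Fin.rev_rev] at this ⊢
    omega

theorem schur_eq_det_ascExp {r : ℕ} {μ : Fin r → ℤ} (hμ : ∀ i, 0 ≤ μ i) (z : Fin r → ℂ) :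
    schur μ z = Equiv.Perm.sign (Fin.revPerm : Equiv.Perm (Fin r)) *
      (powMatrix z (ascExp μ)).det /
        (Matrix.of fun i j : Fin r => z j ^ ((r : ℤ) - 1 - (i : ℕ))).det := by
  rw [schur, ← Matrix.det_permute]
  congr 2
  ext i j
  simp [powMatrix, ← ascExp_rev hμ i]

theorem schur_mustar_eq_det_ascExp {r : ℕ} (k : ℕ) {μ : Fin r → ℤ} (hμ : ∀ i, 0 ≤ μ i)
    {z : Fin r → ℂ} (hz : ∀ j, z j ≠ 0) :
    schur (mustar k μ) z = (∏ j, z j ^ ((r : ℤ) + k - 1)) *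
      (powMatrix (fun l => (z l)⁻¹) (ascExp μ)).det /
        (Matrix.of fun i j : Fin r => z j ^ ((r : ℤ) - 1 - (i : ℕ))).det := by
  rw [schur, ← Matrix.det_mul_row]
  congr 2
  ext i l
  have h := ascExp_rev hμ i.rev
  rw [Fin.rev_rev, Fin.val_rev] at h
  have hexp : mustar k μ i + ((r : ℤ) - 1 - (i : ℕ)) = ((r : ℤ) + k - 1) - ascExp μ i := by
    have := i.isLt
    simp only [mustar]
    omega
  simp only [powMatrix, Matrix.of_apply, hexp, zpow_sub₀ (hz l), zpow_natCast, inv_pow,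
    div_eq_mul_inv]

theorem sum_ascExp {r : ℕ} {μ : Fin r → ℤ} (hμ : ∀ i, 0 ≤ μ i) :
    ∑ i, (ascExp μ i : ℤ) = ∑ i, μ i + ∑ i : Fin r, ((r : ℤ) - 1 - (i : ℕ)) := by
  have hrev := Equiv.sum_comp Fin.revPerm (fun i : Fin r => (ascExp μ i : ℤ))
  simp only [Fin.revPerm_apply] at hrev
  rw [← hrev, ← sum_add_distrib]
  exact sum_congr rfl fun i _ => ascExp_rev hμ i

theorem sum_mustar {r : ℕ} (k : ℕ) (μ : Fin r → ℤ) :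
    ∑ i, mustar k μ i = r * k - ∑ i, μ i := by
  have hrev := Equiv.sum_comp Fin.revPerm μ
  simp only [Fin.revPerm_apply] at hrev
  simp [mustar, sum_sub_distrib, hrev]

def twist (r k : ℕ) (v v' : Fin r → ℤ) : ℂ :=
  exp (2 * Real.pi * I * (∑ i, (v' i : ℂ) - ∑ i, (v i : ℂ)) / (r * (r + k)))

theorem exp_mul_exp_mustar_eq {r : ℕ} (k : ℕ) (v v' : Fin r → ℤ) {μ : Fin r → ℤ}
    (hμ : ∀ i, 0 ≤ μ i) :
    exp (-(2 * (Real.pi : ℂ) * I * (∑ i, (μ i : ℂ)) * (∑ i, (v i : ℂ)) / (r * (r + k)))) *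
      exp (-(2 * (Real.pi : ℂ) * I * (∑ i, (mustar k μ i : ℂ)) * (∑ i, (v' i : ℂ)) /
        (r * (r + k)))) =
    exp (-(2 * Real.pi * I * ((r * k + ∑ i : Fin r, ((r : ℂ) - 1 - (i : ℕ))) * ∑ i, (v' i : ℂ) -
        (∑ i : Fin r, ((r : ℂ) - 1 - (i : ℕ))) * ∑ i, (v i : ℂ)) /
        (r * (r + k)))) * twist r k v v' ^ ∑ i, ascExp μ i := by
  have hsum : (∑ i, (μ i : ℂ)) = ∑ i, (ascExp μ i : ℂ) - ∑ i : Fin r, ((r : ℂ) - 1 - (i : ℕ)) := by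
    have := congrArg (Int.cast : ℤ → ℂ) (sum_ascExp hμ)
    push_cast at this
    rw [this]
    ring
  have hstar : (∑ i, (mustar k μ i : ℂ)) = r * k - ∑ i, (μ i : ℂ) := by
    exact_mod_cast sum_mustar k μ
  rw [twist, ← exp_nat_mul, ← exp_add, ← exp_add, hstar, hsum]
  push_cast
  ring_nf

section ZetaPowers

variable {r k : ℕ} (v v' : Fin r → ℤ)

theorem natCast_add_ne_zero (hr : 0 < r) : (r : ℂ) + k ≠ 0 := by
  exact_mod_cast (by omega : r + k ≠ 0)

theorem zeta_pow (hr : 0 < r) (j : Fin r) : zeta r k v j ^ (r + k) = 1 := by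
  rw [zeta, ← exp_nat_mul, show ((r + k : ℕ) : ℂ) * (2 * Real.pi * I * (v j : ℂ) / (r + k)) =
    (v j : ℂ) * (2 * Real.pi * I) by push_cast; field_simp [natCast_add_ne_zero (k := k) hr]]
  exact Complex.exp_int_mul_two_pi_mul_I (v j)

def twistedZeta (r k : ℕ) (v v' : Fin r → ℤ) (j : Fin r) : ℂ := twist r k v v' * zeta r k v j

theorem twistedZeta_pow (hr : 0 < r) (j : Fin r) :
    twistedZeta r k v v' j ^ (r + k) =
      exp (2 * Real.pi * I * (∑ i, (v' i : ℂ) - ∑ i, (v i : ℂ)) / r) := by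
  rw [twistedZeta, mul_pow, zeta_pow v hr, mul_one, twist, ← exp_nat_mul]
  congr 1
  push_cast
  field_simp [natCast_add_ne_zero (k := k) hr]

theorem prod_twistedZeta_mul_prod_inv_zeta (hr : 0 < r) :
    (∏ j, twistedZeta r k v v' j) * ∏ l, (zeta r k v' l)⁻¹ = 1 := by
  have hprod : ∀ w : Fin r → ℤ,
      ∏ j, zeta r k w j = exp (2 * Real.pi * I * (∑ j, (w j : ℂ)) / (r + k)) := fun w => by
    simp only [zeta]
    rw [← exp_sum, mul_sum, sum_div]
  simp only [twistedZeta, prod_mul_distrib, prod_const, card_univ, Fintype.card_fin,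
    prod_inv_distrib, hprod, twist, ← exp_nat_mul, ← exp_neg, ← exp_add]
  rw [← exp_zero]
  congr 1
  field_simp [natCast_add_ne_zero (k := k) hr, Nat.cast_ne_zero.mpr hr.ne']
  ring

theorem twistedZeta_mul_inv_zeta (hr : 0 < r) {c : ℤ} (hc : ∑ i, v' i = ∑ i, v i + r * c)
    (j l : Fin r) :
    twistedZeta r k v v' j * (zeta r k v' l)⁻¹ =
      exp (2 * Real.pi * I * (v j + c - v' l : ℤ) / (r + k : ℕ)) := by
  have hc' : ∑ i, (v' i : ℂ) = ∑ i, (v i : ℂ) + r * c := by exact_mod_cast hc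
  rw [twistedZeta, twist, zeta, zeta, ← exp_neg, ← exp_add, ← exp_add, hc']
  congr 1
  push_cast
  field_simp [natCast_add_ne_zero (k := k) hr, Nat.cast_ne_zero.mpr hr.ne']
  ring

end ZetaPowers

theorem exists_two_forall_not_dvd {r N : ℕ} {c : ℤ} {v v' : Fin r → ℤ} (hv : StrictAnti v)
    (hv' : StrictAnti v') (hlow : ∀ i, 0 ≤ v i) (hhigh : ∀ i, v i < N)
    (hlow' : ∀ i, 0 ≤ v' i) (hhigh' : ∀ i, v' i < N)
    (hsum : ∑ i, v' i = ∑ i, v i + r * c) (hnsim : ¬ sim v v') :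
    ∃ j₁ j₂, j₁ ≠ j₂ ∧ ∀ l, ¬ (N : ℤ) ∣ v j₁ + c - v' l ∧ ¬ (N : ℤ) ∣ v j₂ + c - v' l := by
  have hdvd_iff : ∀ j l, (N : ℤ) ∣ v j + c - v' l ↔ (v' l : ZMod N) = (v j : ZMod N) + c :=
    fun j l => by
      rw [← ZMod.intCast_zmod_eq_zero_iff_dvd]
      push_cast
      rw [sub_eq_zero, eq_comm]
  obtain ⟨j₁, hj₁⟩ : ∃ j₁, ∀ l, ¬ (N : ℤ) ∣ v j₁ + c - v' l := by
    by_contra! h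
    exact hnsim ⟨-c, fun j => by
      linarith [eq_add_of_forall_exists_dvd hv hv' hlow hhigh hlow' hhigh' hsum h j]⟩
  obtain ⟨j₂, hne, hj₂⟩ : ∃ j₂, j₂ ≠ j₁ ∧ ∀ l, ¬ (N : ℤ) ∣ v j₂ + c - v' l := by
    by_contra! h
    have hmem := mem_range_of_sum_eq
      ((add_left_injective (c : ZMod N)).comp (intCast_zmod_injective hv.injective hlow hhigh))
      (intCast_zmod_injective hv'.injective hlow' hhigh')
      (by
        have h := congrArg (Int.cast : ℤ → ZMod N) hsum
        push_cast at h
        simp only [Function.comp_apply, sum_add_distrib, sum_const, card_univ, Fintype.card_fin,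
          nsmul_eq_mul, h])
      j₁ (fun j hj => by
        obtain ⟨l, hl⟩ := h j hj
        exact ⟨l, (hdvd_iff j l).mp hl⟩)
    obtain ⟨l, hl⟩ := hmem
    exact hj₁ l ((hdvd_iff j₁ l).mpr hl)
  exact ⟨j₁, j₂, hne.symm, fun l => ⟨hj₁ l, hj₂ l⟩⟩

theorem exists_two_twistedZeta_mul_inv_zeta_ne_one {r k : ℕ} (hr : 0 < r) {v v' : Fin r → ℤ}
    (hv : StrictAnti v) (hv' : StrictAnti v') (hlow : ∀ i, 0 ≤ v i)
    (hhigh : ∀ i, v i < (r : ℤ) + k) (hlow' : ∀ i, 0 ≤ v' i) (hhigh' : ∀ i, v' i < (r : ℤ) + k)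
    (hnsim : ¬ sim v v')
    (hγ : exp (2 * Real.pi * I * (∑ i, (v' i : ℂ) - ∑ i, (v i : ℂ)) / r) = 1) :
    ∃ j₁ j₂, j₁ ≠ j₂ ∧ ∀ l, twistedZeta r k v v' j₁ * (zeta r k v' l)⁻¹ ≠ 1 ∧
      twistedZeta r k v v' j₂ * (zeta r k v' l)⁻¹ ≠ 1 := by
  obtain ⟨c, hc⟩ := (exp_two_pi_I_mul_div_eq_one_iff hr.ne' (∑ i, v' i - ∑ i, v i)).mp
    (by push_cast; exact hγ)
  have hsum : ∑ i, v' i = ∑ i, v i + r * c := by linarith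
  obtain ⟨j₁, j₂, hne, hj⟩ := exists_two_forall_not_dvd (N := r + k) hv hv' hlow
    (by exact_mod_cast hhigh) hlow' (by exact_mod_cast hhigh') hsum hnsim
  refine ⟨j₁, j₂, hne, fun l => ?_⟩
  simpa only [twistedZeta_mul_inv_zeta v v' hr hsum, ne_eq,
    exp_two_pi_I_mul_div_eq_one_iff (show r + k ≠ 0 by omega)] using hj l

theorem summand_eq_const_mul {r k : ℕ} (v v' : Fin r → ℤ) : ∃ C : ℂ, ∀ μ ∈ Wk r k,
    exp (-(2 * (Real.pi : ℂ) * I * (∑ i, (μ i : ℂ)) * (∑ i, (v i : ℂ)) / (r * (r + k)))) *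
      exp (-(2 * (Real.pi : ℂ) * I * (∑ i, (mustar k μ i : ℂ)) * (∑ i, (v' i : ℂ)) /
        (r * (r + k)))) * schur μ (zeta r k v) * schur (mustar k μ) (zeta r k v') =
    C * ((powMatrix (twistedZeta r k v v') (ascExp μ)).det *
      (powMatrix (fun l => (zeta r k v' l)⁻¹) (ascExp μ)).det) := by
  let V : (Fin r → ℂ) → ℂ := fun z =>
    (Matrix.of fun i j : Fin r => z j ^ ((r : ℤ) - 1 - (i : ℕ))).det
  let ρ : ℂ := ∑ i : Fin r, ((r : ℂ) - 1 - (i : ℕ))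
  refine ⟨exp (-(2 * Real.pi * I * ((r * k + ρ) * ∑ i, (v' i : ℂ) - ρ * ∑ i, (v i : ℂ)) /
      (r * (r + k)))) * Equiv.Perm.sign (Fin.revPerm : Equiv.Perm (Fin r)) *
      (∏ j, zeta r k v' j ^ ((r : ℤ) + k - 1)) / (V (zeta r k v) * V (zeta r k v')),
    fun μ hμ => ?_⟩
  have hμ0 := (mem_Wk.mp hμ).1
  have hdet : (powMatrix (twistedZeta r k v v') (ascExp μ)).det =
      twist r k v v' ^ (∑ i, ascExp μ i) * (powMatrix (zeta r k v) (ascExp μ)).det := by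
    rw [← prod_pow_eq_pow_sum, ← Matrix.det_mul_column]
    congr 1
    ext i j
    simp [powMatrix, twistedZeta, mul_pow]
  rw [exp_mul_exp_mustar_eq k v v' hμ0, schur_eq_det_ascExp hμ0,
    schur_mustar_eq_det_ascExp k hμ0 (z := zeta r k v') fun j => exp_ne_zero _, hdet]
  ring

theorem sum_Wk_twisted_orthogonality_general (r k : ℕ) (hr : 1 ≤ r)
    (v v' : Fin r → ℤ)
    (hdec : ∀ i j : Fin r, i < j → v j < v i)
    (hlow : ∀ i, 0 ≤ v i) (hhigh : ∀ i, v i < (r : ℤ) + (k : ℤ))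
    (hdec' : ∀ i j : Fin r, i < j → v' j < v' i)
    (hlow' : ∀ i, 0 ≤ v' i) (hhigh' : ∀ i, v' i < (r : ℤ) + (k : ℤ))
    (hnsim : ¬ sim v v') :
    ∑ μ ∈ Wk r k,
      Complex.exp (-(2 * (Real.pi : ℂ) * Complex.I * (∑ i, (μ i : ℂ)) * (∑ i, (v i : ℂ)) /
          ((r : ℂ) * ((r : ℂ) + (k : ℂ))))) *
      Complex.exp (-(2 * (Real.pi : ℂ) * Complex.I * (∑ i, (mustar k μ i : ℂ)) *
          (∑ i, (v' i : ℂ)) / ((r : ℂ) * ((r : ℂ) + (k : ℂ))))) *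
      schur μ (zeta r k v) * schur (mustar k μ) (zeta r k v') = 0 := by
  obtain ⟨C, hC⟩ := summand_eq_const_mul (k := k) v v'
  rw [sum_congr rfl hC, ← mul_sum, sum_Wk_eq_sum_strictMono hr k (fun e =>
      (powMatrix (twistedZeta r k v v') e).det *
        (powMatrix (fun l => (zeta r k v' l)⁻¹) e).det),
    sum_strictMono_zero_mem_det_powMatrix_mul_eq_zero (by omega) (twistedZeta_pow v v' hr)
      (fun l => by rw [inv_pow, zeta_pow v' hr, inv_one])
      (prod_twistedZeta_mul_prod_inv_zeta v v' hr)
      (exists_two_twistedZeta_mul_inv_zeta_ne_one hr hdec hdec' hlow hhigh hlow' hhigh' hnsim),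
    mul_zero]

/-- if `v − v′` is not constant, the twisted pairing over `W_k` vanishes. -/
theorem sum_Wk_twisted_orthogonality (r k : ℕ) (hr : 1 ≤ r) (hk : 1 ≤ k)
    (v v' : Fin r → ℤ)
    (hdec : ∀ i j : Fin r, i < j → v j < v i)
    (hlow : ∀ i, 0 ≤ v i) (hhigh : ∀ i, v i < (r : ℤ) + (k : ℤ))
    (hdec' : ∀ i j : Fin r, i < j → v' j < v' i)
    (hlow' : ∀ i, 0 ≤ v' i) (hhigh' : ∀ i, v' i < (r : ℤ) + (k : ℤ))
    (hnsim : ¬ sim v v') :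
    ∑ μ ∈ Wk r k,
      Complex.exp (-(2 * (Real.pi : ℂ) * Complex.I * (∑ i, (μ i : ℂ)) * (∑ i, (v i : ℂ)) /
          ((r : ℂ) * ((r : ℂ) + (k : ℂ))))) *
      Complex.exp (-(2 * (Real.pi : ℂ) * Complex.I * (∑ i, (mustar k μ i : ℂ)) *
          (∑ i, (v' i : ℂ)) / ((r : ℂ) * ((r : ℂ) + (k : ℂ))))) *
      schur μ (zeta r k v) * schur (mustar k μ) (zeta r k v') = 0 :=
  sum_Wk_twisted_orthogonality_general r k hr v v' hdec hlow hhigh hdec' hlow' hhigh' hnsim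

end VerlindePaper
end
end

section
/- One has Σ_v D(v) = r(r+k)^{r−1}, where the sum is over all integer vectors v = (v_1,…,v_r) with 0 = v_r < v_{r−1} < ⋯ < v_1 < r+k. Equivalently, the Verlinde number V_0(r,0,∅) attached to the empty family of weights equals 1. -/
/-!
With `ζ = exp (2πi/(r+k))` one has `D(v) = Δ(ζ^v) Δ(ζ^{-v})`, where `Δ` is the Vandermonde
determinant; this expression is invariant under permuting `v` and vanishes unless `v` is
injective. Summed over all `w` with `w_r = 0` and the other coordinates free in `[0, r+k)`, it
therefore counts every `v ∈ Vset` exactly `(r-1)!` times. On the other hand, expanding both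
determinants over permutations `σ, τ`, the orthogonality of the characters of `ℤ/(r+k)` in the
`r - 1` free coordinates kills every term with `σ ≠ τ` (as `r ≤ r + k`), leaving `r! (r+k)^(r-1)`.
The Verlinde number `V_0(r,0,∅)` is `Σ_v D(v)` divided by `r (r+k)^(r-1)`.
-/

open scoped BigOperators
open Complex

noncomputable section

namespace VerlindePaper

open Finset Equiv
open scoped Real

section RootsOfUnity

variable {K : Type*} [Field K] {ζ : K} {n m : ℕ}

theorem _root_.IsPrimitiveRoot.sum_Ico_zpow_mul (hζ : IsPrimitiveRoot ζ n) (a : ℤ) :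
    ∑ x ∈ Ico (0 : ℤ) n, ζ ^ (x * a) = if (n : ℤ) ∣ a then (n : K) else 0 := by
  have hIco : Ico (0 : ℤ) n = (range n).map Nat.castEmbedding := by
    ext x
    simp only [mem_Ico, mem_map, mem_range, Nat.castEmbedding_apply]
    constructor
    · rintro ⟨h0, hn⟩; exact ⟨x.toNat, by omega, by omega⟩
    · rintro ⟨y, hy, rfl⟩; omega
  simp only [hIco, sum_map, Nat.castEmbedding_apply, mul_comm _ a, zpow_mul, zpow_natCast]
  split_ifs with h
  · simp [(hζ.zpow_eq_one_iff_dvd a).2 h]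
  · have hne : ζ ^ a ≠ 1 := mt (hζ.zpow_eq_one_iff_dvd a).1 h
    rw [geom_sum_eq hne, ← zpow_natCast, ← zpow_mul, mul_comm, zpow_mul, zpow_natCast,
      hζ.pow_eq_one]
    simp

theorem _root_.Equiv.Perm.cast_sign_mul_self {R α : Type*} [Ring R] [Fintype α] [DecidableEq α]
    (σ : Perm α) : (Perm.sign σ : R) * Perm.sign σ = 1 := by
  rw [← Int.cast_mul, ← Units.val_mul, Int.units_mul_self, Units.val_one, Int.cast_one]

theorem _root_.Equiv.Perm.eq_of_apply_castSucc_eq {σ τ : Perm (Fin (m + 1))}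
    (h : ∀ i : Fin m, σ i.castSucc = τ i.castSucc) : σ = τ := by
  have hlast : σ (Fin.last m) = τ (Fin.last m) := by
    obtain ⟨j, hj⟩ := τ.surjective (σ (Fin.last m))
    induction j using Fin.lastCases with
    | last => exact hj.symm
    | cast i =>
      rw [← h i] at hj
      exact absurd (σ.injective hj) (Fin.castSucc_ne_last i)
  ext1 j
  induction j using Fin.lastCases with
  | last => exact hlast
  | cast i => exact h i

theorem det_vandermonde_zpow_eq_sum {r : ℕ} (w : Fin r → ℤ) :
    (Matrix.vandermonde fun i => ζ ^ w i).det =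
      ∑ σ : Perm (Fin r), (Perm.sign σ : K) * ∏ i, ζ ^ (w i * σ i) := by
  rw [← Matrix.det_transpose, Matrix.det_apply']
  simp [Matrix.vandermonde_apply, ← zpow_natCast, ← zpow_mul]

theorem det_vandermonde_zpow_mul_neg (hζ : ζ ≠ 0) {r : ℕ} (w : Fin r → ℤ) :
    (Matrix.vandermonde fun i => ζ ^ w i).det * (Matrix.vandermonde fun i => ζ ^ (-w) i).det =
      ∑ σ : Perm (Fin r), ∑ τ : Perm (Fin r),
        (Perm.sign σ : K) * Perm.sign τ * ∏ i, ζ ^ (w i * ((σ i : ℤ) - τ i)) := by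
  simp only [det_vandermonde_zpow_eq_sum, sum_mul_sum, Pi.neg_apply]
  refine sum_congr rfl fun σ _ => sum_congr rfl fun τ _ => ?_
  rw [mul_mul_mul_comm, ← prod_mul_distrib]
  congr 2 with i
  rw [← zpow_add₀ hζ]
  ring_nf

def boxLastZero (m n : ℕ) : Finset (Fin (m + 1) → ℤ) :=
  Fintype.piFinset fun i => if i = Fin.last m then {0} else Ico 0 n

theorem sum_boxLastZero_prod_zpow (hζ : IsPrimitiveRoot ζ n) (c : Fin (m + 1) → ℤ) :
    ∑ w ∈ boxLastZero m n, ∏ i, ζ ^ (w i * c i) =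
      if ∀ i : Fin m, (n : ℤ) ∣ c i.castSucc then (n : K) ^ m else 0 := by
  rw [boxLastZero, ← prod_univ_sum _ fun i x => ζ ^ (x * c i), Fin.prod_univ_castSucc]
  simp [Fin.castSucc_ne_last, hζ.sum_Ico_zpow_mul, Fintype.prod_ite_zero]

theorem sum_boxLastZero_det_mul_det_neg (hζ : IsPrimitiveRoot ζ n) (hmn : m < n) :
    ∑ w ∈ boxLastZero m n,
        (Matrix.vandermonde fun i => ζ ^ w i).det * (Matrix.vandermonde fun i => ζ ^ (-w) i).det =
      (m + 1).factorial * (n : K) ^ m := by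
  have hdvd (i j : Fin (m + 1)) : (n : ℤ) ∣ (i : ℤ) - j ↔ i = j := by
    refine ⟨fun h => Fin.ext ?_, fun h => by simp [h]⟩
    have := Int.eq_zero_of_abs_lt_dvd h (by rw [abs_lt]; omega)
    omega
  have hagree (σ τ : Perm (Fin (m + 1))) :
      (∀ i : Fin m, σ i.castSucc = τ i.castSucc) ↔ σ = τ :=
    ⟨Perm.eq_of_apply_castSucc_eq, fun h _ => h ▸ rfl⟩
  simp_rw [det_vandermonde_zpow_mul_neg (hζ.ne_zero (by omega)), sum_comm (s := boxLastZero m n),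
    ← mul_sum, sum_boxLastZero_prod_zpow hζ, hdvd, hagree]
  simp [Perm.cast_sign_mul_self, Fintype.card_perm]

end RootsOfUnity

theorem _root_.Equiv.Perm.card_filter_apply_eq_self {α : Type*} [Fintype α] [DecidableEq α]
    (a : α) : #{σ : Perm α | σ a = a} = (Fintype.card α - 1).factorial := by
  rw [← Fintype.card_subtype, ← Set.card_ne_eq a, ← Fintype.card_perm]
  exact Fintype.card_congr <| (Equiv.subtypeEquivRight fun σ => by simp).trans
    (Perm.subtypeEquivSubtypePerm (· ≠ a)).symm

theorem _root_.Tuple.sort_comp_perm_of_strictAnti {α : Type*} [LinearOrder α] {r : ℕ}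
    {v : Fin r → α} (hv : StrictAnti v) (σ : Perm (Fin r)) :
    Tuple.sort (v ∘ σ) = Fin.revPerm.trans σ.symm := by
  have hcomp : (v ∘ σ) ∘ (Fin.revPerm.trans σ.symm) = v ∘ Fin.rev := by
    ext; simp
  refine (Tuple.eq_sort_iff.2 ⟨?_, fun i j hij hvij => ?_⟩).symm
  · rw [hcomp]
    exact (hv.comp Fin.rev_strictAnti).monotone
  · have := congrFun hcomp i
    have := congrFun hcomp j
    simp_all [hv.injective.eq_iff, hij.ne]

section Decomposition

variable {m k : ℕ}

theorem mem_Vset_succ {v : Fin (m + 1) → ℤ} :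
    v ∈ Vset (m + 1) k ↔ (∀ i, 0 ≤ v i ∧ v i < m + 1 + k) ∧ StrictAnti v ∧ v (Fin.last m) = 0 := by
  have hlast (i : Fin (m + 1)) : (i : ℕ) = m + 1 - 1 ↔ i = Fin.last m := by simp [Fin.ext_iff]
  have hlt (i : Fin (m + 1)) : v i ≤ ((m + 1 : ℕ) : ℤ) + k - 1 ↔ v i < m + 1 + k := by
    push_cast; omega
  simp only [Vset, mem_filter, mem_Icc, Pi.le_def, hlast, hlt, forall_eq, forall_and, StrictAnti]
  rfl

theorem mem_boxLastZero {n : ℕ} (hn : 0 < n) {w : Fin (m + 1) → ℤ} :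
    w ∈ boxLastZero m n ↔ (∀ i, 0 ≤ w i ∧ w i < n) ∧ w (Fin.last m) = 0 := by
  simp only [boxLastZero, Fintype.mem_piFinset, Fin.forall_fin_succ', if_pos, Fin.castSucc_ne_last,
    if_false, mem_Ico, mem_singleton]
  constructor
  · rintro ⟨h, h0⟩; exact ⟨⟨h, by omega⟩, h0⟩
  · rintro ⟨⟨h, -⟩, h0⟩; exact ⟨h, h0⟩

theorem bijOn_comp_Vset_stabilizer :
    Set.BijOn (fun p : (Fin (m + 1) → ℤ) × Perm (Fin (m + 1)) => p.1 ∘ p.2)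
      ↑(Vset (m + 1) k ×ˢ ({σ | σ (Fin.last m) = Fin.last m} : Finset (Perm (Fin (m + 1)))))
      ↑({w ∈ boxLastZero m (m + 1 + k) | Function.Injective w}) := by
  have hn : 0 < m + 1 + k := by omega
  simp only [Set.BijOn, Set.MapsTo, Set.InjOn, Set.SurjOn, Set.subset_def, coe_product, coe_filter,
    Set.mem_prod, mem_coe, Set.mem_ofPred_eq, mem_univ, true_and, mem_Vset_succ,
    mem_boxLastZero hn, Prod.forall, Set.mem_image, Prod.exists]
  refine ⟨?maps, ?inj, ?surj⟩
  · rintro v σ ⟨⟨hbd, hv, hv0⟩, hσ⟩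
    exact ⟨⟨fun i => by exact_mod_cast hbd (σ i), by simp [hσ, hv0]⟩, hv.injective.comp σ.injective⟩
  · rintro v σ ⟨⟨-, hv, -⟩, -⟩ v' σ' ⟨⟨-, hv', -⟩, -⟩ h
    have hsort := congrArg Tuple.sort h
    rw [Tuple.sort_comp_perm_of_strictAnti hv, Tuple.sort_comp_perm_of_strictAnti hv'] at hsort
    have hσ : σ.symm = σ'.symm := Equiv.ext fun x => by simpa using Equiv.congr_fun hsort x.rev
    rw [Equiv.symm_bijective.injective hσ] at h ⊢
    exact Prod.ext (σ'.surjective.injective_comp_right h) rfl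
  · rintro w ⟨⟨hbd, hw0⟩, hinj⟩
    set s := Tuple.sort w
    have hmono : StrictMono (w ∘ s) :=
      (Tuple.monotone_sort w).strictMono_of_injective (hinj.comp s.injective)
    have hs0 : s 0 = Fin.last m := by
      refine hinj (le_antisymm ?_ (hw0 ▸ (hbd _).1))
      simpa [hw0] using hmono.monotone (Fin.zero_le (s.symm (Fin.last m)))
    refine ⟨w ∘ s ∘ Fin.rev, (Fin.revPerm.trans s).symm, ⟨⟨fun i => ?_, ?_, ?_⟩, ?_⟩, ?_⟩
    · exact_mod_cast hbd _
    · exact hmono.comp_strictAnti Fin.rev_strictAnti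
    · simp [hs0, hw0]
    · simp [← hs0]
    · ext i; simp

theorem sum_boxLastZero_eq_factorial_smul_sum_Vset {M : Type*} [AddCommMonoid M]
    (F : (Fin (m + 1) → ℤ) → M) (hF_perm : ∀ w (σ : Perm (Fin (m + 1))), F (w ∘ σ) = F w)
    (hF_inj : ∀ w, ¬Function.Injective w → F w = 0) :
    ∑ w ∈ boxLastZero m (m + 1 + k), F w = m.factorial • ∑ v ∈ Vset (m + 1) k, F v := by
  have hbij := bijOn_comp_Vset_stabilizer (m := m) (k := k)
  calc ∑ w ∈ boxLastZero m (m + 1 + k), F w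
      = ∑ w ∈ boxLastZero m (m + 1 + k) with Function.Injective w, F w :=
        (sum_filter_of_ne fun w _ h => not_not.1 (mt (hF_inj w) h)).symm
    _ = ∑ p ∈ Vset (m + 1) k ×ˢ ({σ | σ (Fin.last m) = Fin.last m} : Finset (Perm (Fin (m + 1)))),
          F (p.1 ∘ p.2) :=
        (sum_nbij _ hbij.mapsTo hbij.injOn hbij.surjOn fun _ _ => rfl).symm
    _ = m.factorial • ∑ v ∈ Vset (m + 1) k, F v := by
        simp [sum_product, hF_perm, Perm.card_filter_apply_eq_self, smul_sum]

end Decomposition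

theorem exp_zpow_sub_mul_exp_zpow_sub (n : ℕ) (a b : ℤ) :
    (exp (2 * π * I / n) ^ b - exp (2 * π * I / n) ^ a) *
        (exp (2 * π * I / n) ^ (-b) - exp (2 * π * I / n) ^ (-a)) =
      (2 * sin (π * (a - b) / n)) ^ 2 := by
  set θ : ℂ := π * (a - b) / n
  set c := exp (π * (a + b) / n * I)
  set u := exp (θ * I)
  have hζ (e : ℤ) : exp (2 * π * I / n) ^ e = exp (e * (2 * π * I / n)) := (exp_int_mul _ e).symm
  have ha : exp (2 * π * I / n) ^ a = c * u := by
    rw [hζ, ← exp_add]; congr 1; ring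
  have hb : exp (2 * π * I / n) ^ b = c / u := by
    rw [hζ, ← exp_sub]; congr 1; ring
  have hsin : sin θ = (u⁻¹ - u) * I / 2 := by rw [sin, neg_mul, exp_neg]
  have hc : c ≠ 0 := exp_ne_zero _
  have hu : u ≠ 0 := exp_ne_zero _
  rw [zpow_neg, zpow_neg, ha, hb, hsin]
  field_simp
  linear_combination (-(1 - u ^ 2) ^ 2) * I_sq

theorem prod_filter_fst_lt_snd {M ι : Type*} [CommMonoid M] [Fintype ι] [LinearOrder ι]
    [LocallyFiniteOrderTop ι] (f : ι → ι → M) :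
    ∏ p ∈ univ.filter (fun p : ι × ι => p.1 < p.2), f p.1 p.2 = ∏ i, ∏ j ∈ Ioi i, f i j := by
  rw [prod_filter, Fintype.prod_prod_type]
  refine prod_congr rfl fun i _ => ?_
  rw [← prod_filter, filter_lt_eq_Ioi]

theorem Dv_eq_det_mul_det (r k : ℕ) (v : Fin r → ℤ) :
    (Dv r k v : ℂ) =
      (Matrix.vandermonde fun i => exp (2 * π * I / (r + k : ℕ)) ^ v i).det *
        (Matrix.vandermonde fun i => exp (2 * π * I / (r + k : ℕ)) ^ (-v) i).det := by
  simp_rw [Matrix.det_vandermonde, ← prod_mul_distrib, Pi.neg_apply, exp_zpow_sub_mul_exp_zpow_sub,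
    Dv, ← prod_filter_fst_lt_snd]
  push_cast
  rfl

theorem sum_Vset_Dv {r : ℕ} (k : ℕ) (hr : 1 ≤ r) :
    ∑ v ∈ Vset r k, Dv r k v = (r : ℝ) * ((r : ℝ) + k) ^ (r - 1) := by
  obtain ⟨m, rfl⟩ : ∃ m, r = m + 1 := ⟨r - 1, by omega⟩
  set n := m + 1 + k
  set ζ := exp (2 * π * I / n)
  have hζ : IsPrimitiveRoot ζ n := isPrimitiveRoot_exp n (by omega)
  set F : (Fin (m + 1) → ℤ) → ℂ := fun w =>
    (Matrix.vandermonde fun i => ζ ^ w i).det * (Matrix.vandermonde fun i => ζ ^ (-w) i).det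
  have hF_perm (w : Fin (m + 1) → ℤ) (σ : Perm (Fin (m + 1))) : F (w ∘ σ) = F w := by
    have hV (x : Fin (m + 1) → ℂ) :
        (Matrix.vandermonde (x ∘ σ)).det = Perm.sign σ * (Matrix.vandermonde x).det :=
      Matrix.det_permute σ (Matrix.vandermonde x)
    calc F (w ∘ σ)
        = (Perm.sign σ * (Matrix.vandermonde fun i => ζ ^ w i).det) *
            (Perm.sign σ * (Matrix.vandermonde fun i => ζ ^ (-w) i).det) := by
          rw [← hV, ← hV]; rfl
      _ = F w := by rw [mul_mul_mul_comm, Perm.cast_sign_mul_self, one_mul]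
  have hF_inj (w : Fin (m + 1) → ℤ) (hw : ¬Function.Injective w) : F w = 0 := by
    refine mul_eq_zero_of_left (not_not.1 fun h => hw ?_) _
    exact (Matrix.det_vandermonde_ne_zero_iff.1 h).of_comp
  have hsum := sum_boxLastZero_det_mul_det_neg hζ (show m < n by omega)
  rw [sum_boxLastZero_eq_factorial_smul_sum_Vset F hF_perm hF_inj] at hsum
  have hF : ∑ v ∈ Vset (m + 1) k, F v = (m + 1) * (n : ℂ) ^ m := by
    refine mul_left_cancel₀ (Nat.cast_ne_zero.2 m.factorial_ne_zero) ?_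
    rw [← nsmul_eq_mul, hsum, Nat.factorial_succ]
    push_cast
    ring
  have hDv : ∑ v ∈ Vset (m + 1) k, (Dv (m + 1) k v : ℂ) = (m + 1) * (n : ℂ) ^ m :=
    (sum_congr rfl fun v _ => Dv_eq_det_mul_det (m + 1) k v).trans hF
  push_cast
  exact_mod_cast hDv

theorem verlinde_zero_zero_empty (r k : ℕ) :
    verlinde r k 0 0 (fun x : Empty => x.elim) =
      ((r : ℂ) * ((r : ℂ) + k) ^ (r - 1))⁻¹ * ∑ v ∈ Vset r k, (Dv r k v : ℂ) := by
  simp [verlinde]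

theorem sum_Dv_eq_and_verlinde_empty_general (r k : ℕ) (hr : 1 ≤ r) :
    (∑ v ∈ Vset r k, Dv r k v = (r : ℝ) * ((r : ℝ) + (k : ℝ)) ^ (r - 1)) ∧
      verlinde r k 0 0 (fun x : Empty => x.elim) = 1 := by
  have hsum := sum_Vset_Dv k hr
  refine ⟨hsum, ?_⟩
  have hrk : (r : ℂ) + k ≠ 0 := by exact_mod_cast (show r + k ≠ 0 by omega)
  rw [verlinde_zero_zero_empty, ← ofReal_sum, hsum]
  push_cast
  exact inv_mul_cancel₀ (mul_ne_zero (Nat.cast_ne_zero.2 (by omega)) (pow_ne_zero _ hrk))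

/-- `Σ_v D(v) = r(r+k)^{r-1}`; equivalently the Verlinde number
`V_0(r,0,∅)` of the empty family equals `1`. -/
theorem sum_Dv_eq_and_verlinde_empty (r k : ℕ) (hr : 1 ≤ r) (hk : 1 ≤ k) :
    (∑ v ∈ Vset r k, Dv r k v = (r : ℝ) * ((r : ℝ) + (k : ℝ)) ^ (r - 1)) ∧
      verlinde r k 0 0 (fun x : Empty => x.elim) = 1 :=
  sum_Dv_eq_and_verlinde_empty_general r k hr

end VerlindePaper
end
end
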